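/- Suppose the distributions D1, D2, D3 on (M,g), with TM = D1 ⊕ D2 ⊕ D3, are integrable, pairwise mixed totally geodesic and pairwise mixed integrable, and P₃h₁ = P₃h₂ = 0. Then for all X ∈ D1 and Y ∈ D3: A_{1,Y} = 0 (hence Div A_{1,Y} = 0), A_{12,Y} = 0 (hence Div A_{12,Y} = 0), g(∇_X H₁, Y) = 0, (Div h̃₂)(X,Y) = 0, and P₃(H₁ + H₂) = 0; consequently every term of the Euler-Lagrange equation of J_{D1,D2} corresponding to variations with B(X,Y) = B(P₁X,P₃Y) + B(P₃X,P₁Y) vanishes. -/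

import Mathlib

open scoped BigOperators
noncomputable section

/-- An abstract model of the ℝ-module of smooth vector fields on a manifold `M`,
together with multiplication by smooth functions, the Lie bracket and the
directional derivative of smooth functions along vector fields. -/
structure SmoothVF (M : Type) where
  /-- the space of smooth vector fields -/
  VF : Type
  [vfAdd : AddCommGroup VF]
  [vfMod : Module ℝ VF]
  /-- multiplication of a vector field by a smooth function -/
  fsmul : (M → ℝ) → VF → VF
  /-- Lie bracket of vector fields -/
  bracket : VF → VF → VF
  /-- directional derivative of a smooth function along a vector field -/
  dd : VF → (M → ℝ) → (M → ℝ)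
  fsmul_one : ∀ X : VF, fsmul 1 X = X
  fsmul_mul : ∀ (f₁ f₂ : M → ℝ) (X : VF), fsmul (f₁ * f₂) X = fsmul f₁ (fsmul f₂ X)
  fsmul_add : ∀ (f : M → ℝ) (X Y : VF), fsmul f (X + Y) = fsmul f X + fsmul f Y
  add_fsmul : ∀ (f₁ f₂ : M → ℝ) (X : VF), fsmul (f₁ + f₂) X = fsmul f₁ X + fsmul f₂ X
  fsmul_const : ∀ (r : ℝ) (X : VF), fsmul (fun _ => r) X = r • X
  bracket_skew : ∀ X Y : VF, bracket X Y = - bracket Y X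
  bracket_add_left : ∀ X Y Z : VF, bracket (X + Y) Z = bracket X Z + bracket Y Z
  dd_add : ∀ (X : VF) (f₁ f₂ : M → ℝ), dd X (f₁ + f₂) = dd X f₁ + dd X f₂
  dd_mul : ∀ (X : VF) (f₁ f₂ : M → ℝ), dd X (f₁ * f₂) = f₁ * dd X f₂ + f₂ * dd X f₁
  dd_add_left : ∀ (X Y : VF) (f : M → ℝ), dd (X + Y) f = dd X f + dd Y f
  dd_fsmul : ∀ (h : M → ℝ) (X : VF) (f : M → ℝ), dd (fsmul h X) f = h * dd X f
  dd_bracket : ∀ (X Y : VF) (f : M → ℝ), dd (bracket X Y) f = dd X (dd Y f) - dd Y (dd X f)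

attribute [instance] SmoothVF.vfAdd SmoothVF.vfMod

/-- A Riemannian metric on the abstract space of vector fields, together with
its Levi-Civita connection (torsion-free and metric-compatible). -/
structure RMetric {M : Type} (V : SmoothVF M) where
  /-- the metric tensor -/
  g : V.VF → V.VF → (M → ℝ)
  /-- the Levi-Civita connection -/
  nabla : V.VF → V.VF → V.VF
  g_symm : ∀ X Y, g X Y = g Y X
  g_add_left : ∀ X Y Z, g (X + Y) Z = g X Z + g Y Z
  g_fsmul_left : ∀ f X Y, g (V.fsmul f X) Y = f * g X Y
  g_nonneg : ∀ X x, 0 ≤ g X X x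
  g_definite : ∀ X, g X X = 0 → X = 0
  nabla_add_left : ∀ X Y Z, nabla (X + Y) Z = nabla X Z + nabla Y Z
  nabla_add_right : ∀ X Y Z, nabla X (Y + Z) = nabla X Y + nabla X Z
  nabla_fsmul_left : ∀ f X Y, nabla (V.fsmul f X) Y = V.fsmul f (nabla X Y)
  nabla_leibniz : ∀ f X Y, nabla X (V.fsmul f Y) = V.fsmul (V.dd X f) Y + V.fsmul f (nabla X Y)
  torsion_free : ∀ X Y, nabla X Y - nabla Y X = V.bracket X Y
  metric_compat : ∀ X Y Z, V.dd X (g Y Z) = g (nabla X Y) Z + g Y (nabla X Z)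

namespace RMetric

variable {M : Type} {V : SmoothVF M} (gm : RMetric V)

/-- The Riemann curvature tensor `R(X,Y)Z = ∇_X∇_Y Z − ∇_Y∇_X Z − ∇_{[X,Y]}Z`. -/
def Rc (X Y Z : V.VF) : V.VF :=
  gm.nabla X (gm.nabla Y Z) - gm.nabla Y (gm.nabla X Z) - gm.nabla (V.bracket X Y) Z

end RMetric

/-- Three pairwise orthogonal distributions `D₁, D₂, D₃` (indices `0, 1, 2`)
decomposing the tangent bundle, described by their orthoprojectors. -/
structure Split3 {M : Type} {V : SmoothVF M} (gm : RMetric V) where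
  /-- the orthoprojector onto the `i`-th distribution -/
  P : Fin 3 → V.VF → V.VF
  P_add : ∀ i X Y, P i (X + Y) = P i X + P i Y
  P_fsmul : ∀ i f X, P i (V.fsmul f X) = V.fsmul f (P i X)
  P_idem : ∀ i X, P i (P i X) = P i X
  P_orth : ∀ i j X, i ≠ j → P i (P j X) = 0
  P_sum : ∀ X, P 0 X + P 1 X + P 2 X = X
  P_selfadj : ∀ i X Y, gm.g (P i X) Y = gm.g X (P i Y)

namespace Split3

variable {M : Type} {V : SmoothVF M} {gm : RMetric V} (s : Split3 gm)

/-- Orthoprojector onto the orthogonal complement of `D_i`. -/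
def Pp (i : Fin 3) (X : V.VF) : V.VF := X - s.P i X

/-- The second fundamental form `h_i` of the distribution `D_i`. -/
def h (i : Fin 3) (X Y : V.VF) : V.VF :=
  (1 / 2 : ℝ) • s.Pp i (gm.nabla (s.P i X) (s.P i Y) + gm.nabla (s.P i Y) (s.P i X))

/-- The integrability tensor `T_i` of the distribution `D_i`. -/
def T (i : Fin 3) (X Y : V.VF) : V.VF :=
  (1 / 2 : ℝ) • s.Pp i (gm.nabla (s.P i X) (s.P i Y) - gm.nabla (s.P i Y) (s.P i X))

/-- The second fundamental form `h̃_i` of `D_i^⊥`. -/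
def ht (i : Fin 3) (X Y : V.VF) : V.VF :=
  (1 / 2 : ℝ) • s.P i (gm.nabla (s.Pp i X) (s.Pp i Y) + gm.nabla (s.Pp i Y) (s.Pp i X))

/-- The integrability tensor `T̃_i` of `D_i^⊥`. -/
def Tt (i : Fin 3) (X Y : V.VF) : V.VF :=
  (1 / 2 : ℝ) • s.P i (gm.nabla (s.Pp i X) (s.Pp i Y) - gm.nabla (s.Pp i Y) (s.Pp i X))

/-- The mixed second fundamental form `𝔥_{ij}(X,Y) = h̃_k(P_iX,P_jY) + h̃_k(P_jX,P_iY)`,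
where `k` is the remaining index. -/
def mh (k i j : Fin 3) (X Y : V.VF) : V.VF :=
  s.ht k (s.P i X) (s.P j Y) + s.ht k (s.P j X) (s.P i Y)

/-- The mixed integrability tensor `𝔗_{ij}(X,Y) = T̃_k(P_iX,P_jY) + T̃_k(P_jX,P_iY)`,
where `k` is the remaining index. -/
def mT (k i j : Fin 3) (X Y : V.VF) : V.VF :=
  s.Tt k (s.P i X) (s.P j Y) + s.Tt k (s.P j X) (s.P i Y)

/-- Orthoprojector onto `D₁ ⊕ D₂`. -/
def P12 (X : V.VF) : V.VF := s.P 0 X + s.P 1 X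

/-- Second fundamental form of `D₁ ⊕ D₂`. -/
def h12 (X Y : V.VF) : V.VF :=
  (1 / 2 : ℝ) • s.P 2 (gm.nabla (s.P12 X) (s.P12 Y) + gm.nabla (s.P12 Y) (s.P12 X))

/-- Integrability tensor of `D₁ ⊕ D₂`. -/
def T12 (X Y : V.VF) : V.VF :=
  (1 / 2 : ℝ) • s.P 2 (gm.nabla (s.P12 X) (s.P12 Y) - gm.nabla (s.P12 Y) (s.P12 X))

/-- Integrability tensor of `(D₁ ⊕ D₂)^⊥ = D₃`'s complement pair, i.e. `T̃` of `D₁⊕D₂`. -/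
def Tt12 (X Y : V.VF) : V.VF :=
  (1 / 2 : ℝ) • s.P12 (gm.nabla (s.P 2 X) (s.P 2 Y) - gm.nabla (s.P 2 Y) (s.P 2 X))

/-- The connection `∇^P_X Y = P ∇_X (P Y)` induced on `D = D₁ ⊕ D₂`. -/
def nablaP (X Y : V.VF) : V.VF := s.P12 (gm.nabla X (s.P12 Y))

/-- The curvature tensor of the induced connection `∇^P`. -/
def RP (X Y Z : V.VF) : V.VF :=
  s.nablaP X (s.nablaP Y Z) - s.nablaP Y (s.nablaP X Z) - s.nablaP (V.bracket X Y) Z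

end Split3

/-- A full Riemannian package on `M`: a metric with its Levi-Civita connection,
three pairwise orthogonal distributions decomposing the tangent bundle,
global orthonormal frames adapted to the distributions, and a volume density. -/
structure Pkg {M : Type} (V : SmoothVF M) where
  /-- the Riemannian metric with its Levi-Civita connection -/
  gm : RMetric V
  /-- the orthoprojectors onto the three distributions -/
  sp : Split3 gm
  /-- index types for the adapted orthonormal frames -/
  ι : Fin 3 → Type
  fint : ∀ i, Fintype (ι i)
  deq : ∀ i, DecidableEq (ι i)
  /-- an orthonormal frame of the `i`-th distribution -/
  E : ∀ i, ι i → V.VF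
  E_mem : ∀ i a, sp.P i (E i a) = E i a
  E_ortho : ∀ i a b, gm.g (E i a) (E i b) = fun _ => @ite ℝ (a = b) (deq i a b) 1 0
  E_span : ∀ i X, sp.P i X = ∑ a ∈ (fint i).elems, V.fsmul (gm.g X (E i a)) (E i a)
  /-- the volume density of the metric (with respect to a reference integral) -/
  dvol : M → ℝ
  dvol_pos : ∀ x, 0 < dvol x

attribute [instance] Pkg.fint Pkg.deq

namespace Pkg

variable {M : Type} {V : SmoothVF M} (p : Pkg V)

/-- Index type of the full adapted orthonormal frame. -/
def idx : Type := Σ i : Fin 3, p.ι i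

instance : Fintype p.idx := inferInstanceAs (Fintype (Σ i : Fin 3, p.ι i))

/-- The full adapted orthonormal frame. -/
def xF (k : p.idx) : V.VF := p.E k.1 k.2

/-- The mean curvature vector `H_i = tr_g h_i` of `D_i`. -/
def H (i : Fin 3) : V.VF := ∑ a : p.ι i, p.sp.h i (p.E i a) (p.E i a)

/-- Divergence of a vector field. -/
def Div (Y : V.VF) : M → ℝ := ∑ k : p.idx, p.gm.g (p.gm.nabla (p.xF k) Y) (p.xF k)

/-- Divergence of a `(1,2)`-tensor field. -/
def DivT (S : V.VF → V.VF → V.VF) (X Y : V.VF) : M → ℝ :=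
  ∑ k : p.idx,
    p.gm.g (p.gm.nabla (p.xF k) (S X Y) - S (p.gm.nabla (p.xF k) X) Y
              - S X (p.gm.nabla (p.xF k) Y)) (p.xF k)

/-- Divergence of a `(1,1)`-tensor field, as a 1-form. -/
def DivOp (S : V.VF → V.VF) (X : V.VF) : M → ℝ :=
  ∑ k : p.idx, p.gm.g (p.gm.nabla (p.xF k) (S X) - S (p.gm.nabla (p.xF k) X)) (p.xF k)

/-- The mutual curvature of the distributions `D_i` and `D_j`. -/
def Smix (i j : Fin 3) : M → ℝ :=
  ∑ a : p.ι i, ∑ b : p.ι j, p.gm.g (p.gm.Rc (p.E i a) (p.E j b) (p.E j b)) (p.E i a)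

/-- The mutual curvature `S_{D₁,D₂}`. -/
def Smut : M → ℝ := p.Smix 0 1

/-- The mixed scalar `P`-curvature `S^P_mix(D₁,D₂)` of the induced connection on `D₁ ⊕ D₂`. -/
def SPmix : M → ℝ :=
  ∑ a : p.ι 0, ∑ b : p.ι 1, p.gm.g (p.sp.RP (p.E 0 a) (p.E 1 b) (p.E 1 b)) (p.E 0 a)

/-- Squared norm of a `(1,2)`-tensor restricted to `D_i × D_j`. -/
def normRes (S : V.VF → V.VF → V.VF) (i j : Fin 3) : M → ℝ :=
  ∑ a : p.ι i, ∑ b : p.ι j, p.gm.g (S (p.E i a) (p.E j b)) (S (p.E i a) (p.E j b))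

/-- Squared norm of a `(1,2)`-tensor. -/
def normT (S : V.VF → V.VF → V.VF) : M → ℝ :=
  ∑ k : p.idx, ∑ l : p.idx, p.gm.g (S (p.xF k) (p.xF l)) (S (p.xF k) (p.xF l))

/-- The gradient of a smooth function. -/
def grad (f : M → ℝ) : V.VF := ∑ k : p.idx, V.fsmul (V.dd (p.xF k) f) (p.xF k)

/-- The shape operator `A_{i,Z}` of `D_i`, `g(A_{i,Z}X, W) = g(h_i(X,W), Z)`. -/
def Aop (i : Fin 3) (Z X : V.VF) : V.VF :=
  ∑ k : p.idx, V.fsmul (p.gm.g (p.sp.h i X (p.xF k)) Z) (p.xF k)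

/-- The shape operator `A_{12,Z}` of `D₁ ⊕ D₂`. -/
def Aop12 (Z X : V.VF) : V.VF :=
  ∑ k : p.idx, V.fsmul (p.gm.g (p.sp.h12 X (p.xF k)) Z) (p.xF k)

/-- The operator `T̃♯_{i,Z}`, `g(T̃♯_{i,Z}X, W) = g(T̃_i(X,W), Z)`. -/
def Ttop (i : Fin 3) (Z X : V.VF) : V.VF :=
  ∑ k : p.idx, V.fsmul (p.gm.g (p.sp.Tt i X (p.xF k)) Z) (p.xF k)

/-- The operator `T̃♯_{12,Z}` of `D₁ ⊕ D₂`. -/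
def Ttop12 (Z X : V.VF) : V.VF :=
  ∑ k : p.idx, V.fsmul (p.gm.g (p.sp.Tt12 X (p.xF k)) Z) (p.xF k)

/-- The action `J_{D₁,D₂}(g) = ∫ S_{D₁,D₂} dvol_g`, with respect to the
reference integral `I`. -/
def J (I : (M → ℝ) →ₗ[ℝ] ℝ) : ℝ := I (p.Smut * p.dvol)

/-- The modified action `J_{D₁⊂D}(g) = ∫ S_{D₁,D₁^⊥∩D} dvol_g` (here `D₃ = D₁^⊥ ∩ D`). -/
def Jmod (I : (M → ℝ) →ₗ[ℝ] ℝ) : ℝ := I (p.Smix 0 2 * p.dvol)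

/-- The volume `Vol(g) = ∫ dvol_g`. -/
def Vol (I : (M → ℝ) →ₗ[ℝ] ℝ) : ℝ := I p.dvol

end Pkg

/-- Two endomorphisms have the same range (as idempotents: each fixes the
image of the other). -/
def SameRange {A : Type} (Q Q' : A → A) : Prop :=
  (∀ X, Q (Q' X) = Q' X) ∧ (∀ X, Q' (Q X) = Q X)

/-- A smooth 1-parameter variation `g_t` of the Riemannian package `p0`,
with infinitesimal variation tensor `B = ∂ₜ g_t |_{t=0}`. -/
structure Variation {M : Type} {V : SmoothVF M} (p0 : Pkg V) where
  /-- the family of Riemannian packages -/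
  Gt : ℝ → Pkg V
  at0 : Gt 0 = p0
  /-- the infinitesimal variation `B = ∂ₜ g_t |_{t=0}` -/
  B : V.VF → V.VF → (M → ℝ)
  derivB : ∀ X Y x, HasDerivAt (fun t => (Gt t).gm.g X Y x) (B X Y x) 0

namespace Variation

variable {M : Type} {V : SmoothVF M} {p0 : Pkg V} (v : Variation p0)

/-- The variation keeps the distributions `D₁` and `D₂` fixed (and hence
orthogonal); the complement `D₃(t)` may vary. -/
def KeepsD12 : Prop :=
  ∀ t, SameRange ((v.Gt t).sp.P 0) (p0.sp.P 0) ∧ SameRange ((v.Gt t).sp.P 1) (p0.sp.P 1)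

/-- Adapted variation: all three distributions stay fixed and pairwise orthogonal. -/
def Adapted : Prop := ∀ t, ∀ i : Fin 3, SameRange ((v.Gt t).sp.P i) (p0.sp.P i)

/-- Volume-preserving variation. -/
def VolPres (I : (M → ℝ) →ₗ[ℝ] ℝ) : Prop := ∀ t, (v.Gt t).Vol I = p0.Vol I

end Variation

/-- The left-hand side of the Euler-Lagrange equation for variations with
`B = B|_{(D₁×D₃)∪(D₃×D₁)}`, evaluated on `X ∈ D₁`, `Y ∈ D₃`. -/
def EL13 {M : Type} {V : SmoothVF M} (p : Pkg V) (X Y : V.VF) : M → ℝ :=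
  let G := p.gm.g
  let s := p.sp
  let E := p.E
  ( 2 * (∑ a : p.ι 0, ∑ i : p.ι 1,
      G (s.mh 0 1 2 (E 1 i) Y) (E 0 a) * G (s.T 0 (E 0 a) X) (E 1 i))
  + 2 * (G (s.T 0 X (s.P 0 (p.H 1 + p.H 2))) Y)
  + p.DivOp (p.Aop 0 Y) X
  - p.DivOp (p.Ttop 0 X) Y
  + (∑ a : p.ι 0, ∑ i : p.ι 1,
      G (s.mh 0 1 2 (E 1 i) Y) (E 0 a) * G (s.h 0 (E 0 a) X) (E 1 i))
  + G (s.Tt 0 Y (p.H 0)) X - G (s.ht 0 Y (p.H 0)) X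
  + G (p.H 0) Y * G (s.P 0 (p.H 1 + p.H 2)) X
  - G (p.gm.nabla X (p.H 0)) Y
  - p.DivT (s.ht 1) X Y
  + (∑ a : p.ι 0, ∑ i : p.ι 1,
      G (s.mT 0 1 2 (E 1 i) Y) (E 0 a) * G (s.T 0 (E 0 a) X) (E 1 i))
  - (∑ a : p.ι 0, ∑ i : p.ι 1,
      G (s.h 0 (E 0 a) X) (E 1 i) * G (s.mT 1 0 2 (E 0 a) Y) (E 1 i))
  - (∑ i : p.ι 1, ∑ μ : p.ι 2,
      G (s.mh 1 0 2 X (E 2 μ)) (E 1 i) * G (s.T 2 (E 2 μ) Y) (E 1 i))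
  - (∑ a : p.ι 0, ∑ i : p.ι 1,
      G (s.mh 1 0 2 (E 0 a) Y) (E 1 i) * G (s.T 0 (E 0 a) X) (E 1 i))
  - (∑ i : p.ι 1, ∑ μ : p.ι 2,
      G (s.h 2 (E 2 μ) Y) (E 1 i) * G (s.mT 1 0 2 (E 2 μ) X) (E 1 i))
  - G (p.H 1) X * G (p.H 1) Y
  + (∑ i : p.ι 1, ∑ j : p.ι 1,
      G X (s.h 1 (E 1 i) (E 1 j)) * G Y (s.h 1 (E 1 i) (E 1 j)))
  + (∑ i : p.ι 1, ∑ j : p.ι 1,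
      G X (s.T 1 (E 1 i) (E 1 j)) * G Y (s.T 1 (E 1 i) (E 1 j)))
  - 2 * (∑ i : p.ι 1, ∑ μ : p.ι 2,
      G (s.mT 1 0 2 (E 2 μ) X) (E 1 i) * G (s.T 2 (E 2 μ) Y) (E 1 i))
  - 2 * (∑ a : p.ι 0, ∑ i : p.ι 1,
      G (s.T 0 (E 0 a) X) (E 1 i) * G (s.mT 1 0 2 (E 0 a) Y) (E 1 i))
  - 2 * (∑ i : p.ι 1, ∑ μ : p.ι 2,
      G (s.h 2 (E 2 μ) Y) (E 1 i) * G (s.mT 2 0 1 (E 1 i) X) (E 2 μ))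
  - 2 * (G Y (s.Tt 2 X (p.H 2)))
  - p.DivOp (p.Aop12 Y) X
  + p.DivOp (p.Ttop12 X) Y
  - (∑ i : p.ι 1, ∑ μ : p.ι 2,
      G (s.h 2 (E 2 μ) Y) (E 1 i) * G (s.mh 2 0 1 (E 1 i) X) (E 2 μ))
  - G (s.T 2 Y (s.P 2 (p.H 0 + p.H 1))) X
  + G (s.h 2 Y (s.P 2 (p.H 0 + p.H 1))) X
  - G (s.P 2 (p.H 0 + p.H 1)) Y * G (p.H 2) X
  + G (p.gm.nabla X (s.P 2 (p.H 0 + p.H 1))) Y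
  - (∑ i : p.ι 1, ∑ μ : p.ι 2,
      G (s.T 2 (E 2 μ) Y) (E 1 i) * G (s.mT 2 0 1 (E 1 i) X) (E 2 μ)) )

/-!
Write `i, j, k` for the three indices in any order. Splitting `T̃_k` and `h̃_k` along
`D_k^⊥ = D_i ⊕ D_j` into their `D_i × D_i`, mixed and `D_j × D_j` parts shows that
`D_k^⊥` is integrable (`T̃_k = 0`) when `D_i`, `D_j` are integrable and `(D_i, D_j)` is
mixed integrable, and totally geodesic (`h̃_k = 0`) when `P_k h_i = P_k h_j = 0` and
`(D_i, D_j)` is mixed totally geodesic. For `k = 3` this gives `h_{12} = h̃_3 = 0` and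
`T̃_{12} = T_3 = 0`. Moreover, for `X ∈ D_i`, `Y ∈ D_j` the `D_k`-component of `∇_X Y` is
`𝔥_{ij}(X,Y) + 𝔗_{ij}(X,Y) = 0`; with `H₁ ∈ D₂` this yields `g(∇_X H₁, Y) = 0` and
`Div h̃₂ = 0` on `D₁ × D₃`. Each term of the Euler–Lagrange expression then contains one of
these vanishing quantities.
-/

namespace SmoothVF

variable {M : Type} (V : SmoothVF M)

theorem fsmul_zero_left (X : V.VF) : V.fsmul 0 X = 0 := by
  rw [show (0 : M → ℝ) = fun _ => 0 from rfl, V.fsmul_const, zero_smul]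

theorem dd_zero (X : V.VF) : V.dd X 0 = 0 := by
  simpa using V.dd_add X 0 0

end SmoothVF

namespace RMetric

variable {M : Type} {V : SmoothVF M} (gm : RMetric V)

theorem nabla_zero_left (X : V.VF) : gm.nabla 0 X = 0 := by
  simpa using gm.nabla_add_left 0 0 X

theorem nabla_zero_right (X : V.VF) : gm.nabla X 0 = 0 := by
  simpa using gm.nabla_add_right X 0 0

def gLeft (Z : V.VF) : V.VF →+ (M → ℝ) :=
  AddMonoidHom.mk' (gm.g · Z) (gm.g_add_left · · Z)

theorem g_zero_left (X : V.VF) : gm.g 0 X = 0 := (gm.gLeft X).map_zero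

theorem g_zero_right (X : V.VF) : gm.g X 0 = 0 := by rw [gm.g_symm, gm.g_zero_left]

theorem g_sub_left (X Y Z : V.VF) : gm.g (X - Y) Z = gm.g X Z - gm.g Y Z :=
  (gm.gLeft Z).map_sub X Y

theorem g_nabla_eq_zero_of_g_eq_zero {X Y Z : V.VF} (hZY : gm.g Z Y = 0)
    (hZ : gm.g Z (gm.nabla X Y) = 0) : gm.g (gm.nabla X Z) Y = 0 := by
  have h := gm.metric_compat X Z Y
  rwa [hZY, V.dd_zero, hZ, add_zero, eq_comm] at h

end RMetric

namespace Split3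

variable {M : Type} {V : SmoothVF M} {gm : RMetric V} (s : Split3 gm)

def Phom (i : Fin 3) : V.VF →+ V.VF := AddMonoidHom.mk' (s.P i) (s.P_add i)

theorem P_zero (i : Fin 3) : s.P i 0 = 0 := (s.Phom i).map_zero

theorem P_sub (i : Fin 3) (X Y : V.VF) : s.P i (X - Y) = s.P i X - s.P i Y :=
  (s.Phom i).map_sub X Y

theorem P_finset_sum {α : Type*} (i : Fin 3) (t : Finset α) (f : α → V.VF) :
    s.P i (∑ a ∈ t, f a) = ∑ a ∈ t, s.P i (f a) :=
  map_sum (s.Phom i) f t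

theorem P_neg (i : Fin 3) (X : V.VF) : s.P i (-X) = -s.P i X := (s.Phom i).map_neg X

theorem P_smul (i : Fin 3) (r : ℝ) (X : V.VF) : s.P i (r • X) = r • s.P i X := by
  rw [← V.fsmul_const, s.P_fsmul, V.fsmul_const]

theorem P_eq_zero_of_P_eq_self {i j : Fin 3} (hij : i ≠ j) {X : V.VF} (hX : s.P j X = X) :
    s.P i X = 0 := by
  rw [← hX, s.P_orth i j X hij]

theorem g_eq_zero_of_P_eq_self {j : Fin 3} {Y Z : V.VF} (hY : s.P j Y = Y)
    (hZ : s.P j Z = 0) : gm.g Y Z = 0 := by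
  rw [← hY, s.P_selfadj, hZ, gm.g_zero_right]

theorem g_eq_zero_of_P_eq_zero {j : Fin 3} {Y Z : V.VF} (hZ : s.P j Z = 0)
    (hY : s.P j Y = Y) : gm.g Z Y = 0 := by
  rw [gm.g_symm, s.g_eq_zero_of_P_eq_self hY hZ]

theorem Pp_add (i : Fin 3) (X Y : V.VF) : s.Pp i (X + Y) = s.Pp i X + s.Pp i Y := by
  simp only [Pp, s.P_add]
  abel

theorem Pp_Pp (i : Fin 3) (X : V.VF) : s.Pp i (s.Pp i X) = s.Pp i X := by
  simp only [Pp, s.P_sub, s.P_idem, sub_self, sub_zero]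

theorem Pp_P {i j : Fin 3} (hij : i ≠ j) (X : V.VF) : s.Pp i (s.P j X) = s.P j X := by
  rw [Pp, s.P_orth i j X hij, sub_zero]

theorem Pp_eq_add {i j k : Fin 3} (hij : i ≠ j) (hik : i ≠ k) (hjk : j ≠ k) (X : V.VF) :
    s.Pp i X = s.P j X + s.P k X := by
  have hsum := s.P_sum X
  rw [Pp]
  nth_rw 1 [← hsum]
  revert hij hik hjk
  fin_cases i <;> fin_cases j <;> fin_cases k <;> intros <;>
    first | contradiction | (simp only [Fin.zero_eta, Fin.mk_one, Fin.reduceFinMk]; abel)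

theorem P_eq_self_of_P_eq_zero {i j k : Fin 3} (hij : i ≠ j) (hik : i ≠ k) (hjk : j ≠ k)
    {X : V.VF} (hi : s.P i X = 0) (hj : s.P j X = 0) : s.P k X = X := by
  have h := s.Pp_eq_add hij hik hjk X
  rwa [Pp, hi, hj, sub_zero, zero_add, eq_comm] at h

theorem P_h_self (i : Fin 3) (X Y : V.VF) : s.P i (s.h i X Y) = 0 := by
  rw [h, s.P_smul, Pp, s.P_sub, s.P_idem, sub_self, smul_zero]

theorem P12_eq_Pp (X : V.VF) : s.P12 X = s.Pp 2 X := by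
  rw [P12, s.Pp_eq_add (j := 0) (k := 1) (by decide) (by decide) (by decide)]

theorem h12_eq_ht (X Y : V.VF) : s.h12 X Y = s.ht 2 X Y := by
  simp only [h12, ht, P12_eq_Pp]

theorem Tt12_eq_T (X Y : V.VF) : s.Tt12 X Y = s.T 2 X Y := by
  simp only [Tt12, T, P12_eq_Pp]

theorem ht_symm (k : Fin 3) (X Y : V.VF) : s.ht k X Y = s.ht k Y X := by
  rw [ht, ht, add_comm]

theorem Tt_antisymm (k : Fin 3) (X Y : V.VF) : s.Tt k X Y = -s.Tt k Y X := by
  rw [Tt, Tt, ← smul_neg, ← s.P_neg, neg_sub]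

theorem mh_comm (k i j : Fin 3) (X Y : V.VF) : s.mh k i j X Y = s.mh k j i X Y :=
  add_comm _ _

theorem mT_comm (k i j : Fin 3) (X Y : V.VF) : s.mT k i j X Y = s.mT k j i X Y :=
  add_comm _ _

theorem P_ht (k : Fin 3) (X Y : V.VF) : s.P k (s.ht k X Y) = s.ht k X Y := by
  rw [ht, s.P_smul, s.P_idem]

theorem ht_add_left (k : Fin 3) (X Y Z : V.VF) :
    s.ht k (X + Y) Z = s.ht k X Z + s.ht k Y Z := by
  simp only [ht, s.Pp_add, gm.nabla_add_left, gm.nabla_add_right, ← smul_add, ← s.P_add]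
  congr 2
  abel

theorem ht_add_right (k : Fin 3) (X Y Z : V.VF) :
    s.ht k Z (X + Y) = s.ht k Z X + s.ht k Z Y := by
  rw [s.ht_symm, s.ht_add_left, s.ht_symm k X, s.ht_symm k Y]

theorem Tt_add_left (k : Fin 3) (X Y Z : V.VF) :
    s.Tt k (X + Y) Z = s.Tt k X Z + s.Tt k Y Z := by
  simp only [Tt, s.Pp_add, gm.nabla_add_left, gm.nabla_add_right, ← smul_add, ← s.P_add]
  congr 2
  abel

theorem Tt_add_right (k : Fin 3) (X Y Z : V.VF) :
    s.Tt k Z (X + Y) = s.Tt k Z X + s.Tt k Z Y := by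
  rw [s.Tt_antisymm, s.Tt_add_left, s.Tt_antisymm k X, s.Tt_antisymm k Y, neg_add, neg_neg,
    neg_neg]

theorem ht_zero_left (k : Fin 3) (Y : V.VF) : s.ht k 0 Y = 0 := by
  simpa using s.ht_add_left k 0 0 Y

theorem Tt_zero_left (k : Fin 3) (Y : V.VF) : s.Tt k 0 Y = 0 := by
  simpa using s.Tt_add_left k 0 0 Y

theorem h_zero_right (i : Fin 3) (X : V.VF) : s.h i X 0 = 0 := by
  rw [h, s.P_zero, gm.nabla_zero_left, gm.nabla_zero_right, add_zero, Pp, s.P_zero,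
    sub_zero, smul_zero]

theorem ht_Pp_Pp (k : Fin 3) (X Y : V.VF) : s.ht k (s.Pp k X) (s.Pp k Y) = s.ht k X Y := by
  rw [ht, ht, s.Pp_Pp, s.Pp_Pp]

theorem Tt_Pp_Pp (k : Fin 3) (X Y : V.VF) : s.Tt k (s.Pp k X) (s.Pp k Y) = s.Tt k X Y := by
  rw [Tt, Tt, s.Pp_Pp, s.Pp_Pp]

theorem ht_eq_mh {i j : Fin 3} (k : Fin 3) (hij : i ≠ j) {X Y : V.VF}
    (hX : s.P i X = X) (hY : s.P j Y = Y) : s.ht k X Y = s.mh k i j X Y := by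
  rw [mh, hX, hY, s.P_eq_zero_of_P_eq_self hij.symm hX, s.P_eq_zero_of_P_eq_self hij hY,
    s.ht_zero_left, add_zero]

theorem Tt_eq_mT {i j : Fin 3} (k : Fin 3) (hij : i ≠ j) {X Y : V.VF}
    (hX : s.P i X = X) (hY : s.P j Y = Y) : s.Tt k X Y = s.mT k i j X Y := by
  rw [mT, hX, hY, s.P_eq_zero_of_P_eq_self hij.symm hX, s.P_eq_zero_of_P_eq_self hij hY,
    s.Tt_zero_left, add_zero]

theorem P_nabla_eq_ht_add_Tt (k : Fin 3) {X Y : V.VF} (hX : s.Pp k X = X) (hY : s.Pp k Y = Y) :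
    s.P k (gm.nabla X Y) = s.ht k X Y + s.Tt k X Y := by
  rw [ht, Tt, hX, hY, ← smul_add, ← s.P_add, add_add_sub_cancel, ← two_smul ℝ, s.P_smul,
    smul_smul]
  norm_num

theorem P_nabla_eq_mh_add_mT {i j k : Fin 3} (hij : i ≠ j) (hki : k ≠ i) (hkj : k ≠ j)
    {X Y : V.VF} (hX : s.P i X = X) (hY : s.P j Y = Y) :
    s.P k (gm.nabla X Y) = s.mh k i j X Y + s.mT k i j X Y := by
  rw [s.P_nabla_eq_ht_add_Tt k (by rw [← hX, s.Pp_P hki]) (by rw [← hY, s.Pp_P hkj]),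
    s.ht_eq_mh k hij hX hY, s.Tt_eq_mT k hij hX hY]

theorem ht_eq_ht_P_of_mh {i j k : Fin 3} (hji : j ≠ i) (hjk : j ≠ k) (hik : i ≠ k)
    (hmh : ∀ X Y, s.mh j i k X Y = 0) {Y : V.VF} (hY : s.P k Y = Y) (Z : V.VF) :
    s.ht j Z Y = s.ht j (s.P k Z) Y := by
  calc s.ht j Z Y = s.ht j (s.Pp j Z) (s.Pp j Y) := (s.ht_Pp_Pp j Z Y).symm
    _ = s.ht j (s.P i Z) Y + s.ht j (s.P k Z) Y := by
      rw [s.Pp_eq_add hji hjk hik, s.Pp_eq_add hji hjk hik, s.P_eq_zero_of_P_eq_self hik hY,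
        hY, zero_add, s.ht_add_left]
    _ = s.ht j (s.P k Z) Y := by rw [s.ht_eq_mh j hik (s.P_idem i Z) hY, hmh, zero_add]

theorem P_eq_zero_of_P_Pp_eq_zero {i k : Fin 3} (hki : k ≠ i) {X : V.VF}
    (hPp : s.P k (s.Pp i X) = 0) : s.P k X = 0 := by
  have hX := s.P_add k (s.P i X) (s.Pp i X)
  rwa [s.P_orth k i X hki, hPp, add_zero, Pp, add_sub_cancel] at hX

theorem Tt_P_P_eq_zero {i k : Fin 3} (hki : k ≠ i) {X Y : V.VF} (hT : s.T i X Y = 0) :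
    s.Tt k (s.P i X) (s.P i Y) = 0 := by
  rw [T, smul_eq_zero_iff_right (by norm_num)] at hT
  rw [Tt, s.Pp_P hki, s.Pp_P hki,
    s.P_eq_zero_of_P_Pp_eq_zero hki (by rw [hT, s.P_zero]), smul_zero]

theorem ht_P_P_eq_zero {i k : Fin 3} (hki : k ≠ i) {X Y : V.VF}
    (hh : s.P k (s.h i X Y) = 0) : s.ht k (s.P i X) (s.P i Y) = 0 := by
  rw [h, s.P_smul, smul_eq_zero_iff_right (by norm_num)] at hh
  rw [ht, s.Pp_P hki, s.Pp_P hki, s.P_eq_zero_of_P_Pp_eq_zero hki hh, smul_zero]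

theorem Tt_eq_add_mT {i j k : Fin 3} (hki : k ≠ i) (hkj : k ≠ j) (hij : i ≠ j) (X Y : V.VF) :
    s.Tt k X Y =
      s.Tt k (s.P i X) (s.P i Y) + s.mT k i j X Y + s.Tt k (s.P j X) (s.P j Y) := by
  rw [← s.Tt_Pp_Pp, s.Pp_eq_add hki hkj hij, s.Pp_eq_add hki hkj hij, mT, s.Tt_add_left,
    s.Tt_add_right, s.Tt_add_right]
  abel

theorem ht_eq_add_mh {i j k : Fin 3} (hki : k ≠ i) (hkj : k ≠ j) (hij : i ≠ j) (X Y : V.VF) :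
    s.ht k X Y =
      s.ht k (s.P i X) (s.P i Y) + s.mh k i j X Y + s.ht k (s.P j X) (s.P j Y) := by
  rw [← s.ht_Pp_Pp, s.Pp_eq_add hki hkj hij, s.Pp_eq_add hki hkj hij, mh, s.ht_add_left,
    s.ht_add_right, s.ht_add_right]
  abel

theorem Tt_eq_zero_of_mixed_integrable {i j k : Fin 3} (hki : k ≠ i) (hkj : k ≠ j)
    (hij : i ≠ j) (hTi : ∀ X Y, s.T i X Y = 0) (hTj : ∀ X Y, s.T j X Y = 0)
    (hmT : ∀ X Y, s.mT k i j X Y = 0) (X Y : V.VF) : s.Tt k X Y = 0 := by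
  rw [s.Tt_eq_add_mT hki hkj hij, s.Tt_P_P_eq_zero hki (hTi X Y),
    s.Tt_P_P_eq_zero hkj (hTj X Y), hmT, add_zero, add_zero]

theorem ht_eq_zero_of_mixed_totally_geodesic {i j k : Fin 3} (hki : k ≠ i) (hkj : k ≠ j)
    (hij : i ≠ j) (hhi : ∀ X Y, s.P k (s.h i X Y) = 0) (hhj : ∀ X Y, s.P k (s.h j X Y) = 0)
    (hmh : ∀ X Y, s.mh k i j X Y = 0) (X Y : V.VF) : s.ht k X Y = 0 := by
  rw [s.ht_eq_add_mh hki hkj hij, s.ht_P_P_eq_zero hki (hhi X Y),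
    s.ht_P_P_eq_zero hkj (hhj X Y), hmh, add_zero, add_zero]

theorem g_nabla_eq_zero_of_mh_of_mT {i j k : Fin 3} (hij : i ≠ j) (hki : k ≠ i) (hkj : k ≠ j)
    {X Y Z : V.VF} (hX : s.P i X = X) (hY : s.P j Y = Y) (hZ : s.P k Z = Z)
    (hmh : s.mh k i j X Y = 0) (hmT : s.mT k i j X Y = 0) :
    gm.g (gm.nabla X Z) Y = 0 := by
  refine gm.g_nabla_eq_zero_of_g_eq_zero
    (s.g_eq_zero_of_P_eq_self hZ (s.P_eq_zero_of_P_eq_self hkj hY)) ?_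
  rw [← hZ, s.P_selfadj, s.P_nabla_eq_mh_add_mT hij hki hkj hX hY, hmh, hmT, add_zero,
    gm.g_zero_right]

end Split3

namespace Pkg

variable {M : Type} {V : SmoothVF M} (p : Pkg V)

theorem P_xF (l : p.idx) : p.sp.P l.1 (p.xF l) = p.xF l := p.E_mem l.1 l.2

theorem P_H_eq_zero {i j : Fin 3} (hh : ∀ X Y, p.sp.P j (p.sp.h i X Y) = 0) :
    p.sp.P j (p.H i) = 0 := by
  rw [H, p.sp.P_finset_sum]
  exact Finset.sum_eq_zero fun a _ => hh _ _

theorem sum_fsmul_xF_eq_zero {f : p.idx → M → ℝ} (hf : ∀ l, f l = 0) :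
    ∑ l, V.fsmul (f l) (p.xF l) = 0 :=
  Finset.sum_eq_zero fun l _ => by rw [hf, V.fsmul_zero_left]

theorem DivOp_eq_zero {S : V.VF → V.VF} (hS : ∀ X, S X = 0) (X : V.VF) : p.DivOp S X = 0 :=
  Finset.sum_eq_zero fun l _ => by
    rw [hS, hS, p.gm.nabla_zero_right, sub_zero, p.gm.g_zero_left]

theorem P_H_eq_self {i j k : Fin 3} (hij : i ≠ j) (hik : i ≠ k) (hjk : j ≠ k)
    (hh : ∀ X Y, p.sp.P k (p.sp.h i X Y) = 0) : p.sp.P j (p.H i) = p.H i :=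
  p.sp.P_eq_self_of_P_eq_zero hik hij hjk.symm (p.P_H_eq_zero (p.sp.P_h_self i))
    (p.P_H_eq_zero hh)

theorem DivOp_Aop_eq_zero {i : Fin 3} {Z : V.VF} (hZ : ∀ X Y, p.gm.g (p.sp.h i X Y) Z = 0)
    (X : V.VF) : p.DivOp (p.Aop i Z) X = 0 :=
  p.DivOp_eq_zero (fun _ => p.sum_fsmul_xF_eq_zero fun _ => hZ _ _) X

theorem DivOp_Aop12_eq_zero {Z : V.VF} (hZ : ∀ X Y, p.gm.g (p.sp.h12 X Y) Z = 0)
    (X : V.VF) : p.DivOp (p.Aop12 Z) X = 0 :=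
  p.DivOp_eq_zero (fun _ => p.sum_fsmul_xF_eq_zero fun _ => hZ _ _) X

theorem DivOp_Ttop_eq_zero {i : Fin 3} (hTt : ∀ X Y, p.sp.Tt i X Y = 0) (Z X : V.VF) :
    p.DivOp (p.Ttop i Z) X = 0 :=
  p.DivOp_eq_zero (fun _ => p.sum_fsmul_xF_eq_zero fun _ => by rw [hTt, p.gm.g_zero_left]) X

theorem DivOp_Ttop12_eq_zero (hT : ∀ X Y, p.sp.T 2 X Y = 0) (Z X : V.VF) :
    p.DivOp (p.Ttop12 Z) X = 0 :=
  p.DivOp_eq_zero (fun _ => p.sum_fsmul_xF_eq_zero fun _ => by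
    rw [p.sp.Tt12_eq_T, hT, p.gm.g_zero_left]) X

theorem DivT_ht_eq_zero {i j k : Fin 3} (hij : i ≠ j) (hik : i ≠ k) (hjk : j ≠ k)
    (hmh_ik : ∀ X Y, p.sp.mh j i k X Y = 0)
    (hmh_ij : ∀ X Y, p.sp.mh k i j X Y = 0) (hmT_ij : ∀ X Y, p.sp.mT k i j X Y = 0)
    (hmh_jk : ∀ X Y, p.sp.mh i j k X Y = 0) (hmT_jk : ∀ X Y, p.sp.mT i j k X Y = 0)
    {X Y : V.VF} (hX : p.sp.P i X = X) (hY : p.sp.P k Y = Y) :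
    p.DivT (p.sp.ht j) X Y = 0 := by
  refine Finset.sum_eq_zero fun l _ => ?_
  rw [p.sp.ht_eq_mh j hik hX hY, hmh_ik, p.gm.nabla_zero_right]
  -- `h̃_j` is `D_j`-valued, so only frame vectors `ξ ∈ D_j` contribute; for those,
  -- `∇_ξ X ⊥ D_k` and `∇_ξ Y ⊥ D_i` by mixed total geodesy and mixed integrability.
  by_cases hl : l.1 = j
  · have hξ : p.sp.P j (p.xF l) = p.xF l := hl ▸ p.P_xF l
    have hkX : p.sp.P k (p.gm.nabla (p.xF l) X) = 0 := by
      rw [p.sp.P_nabla_eq_mh_add_mT hij.symm hjk.symm hik.symm hξ hX, p.sp.mh_comm,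
        p.sp.mT_comm, hmh_ij, hmT_ij, add_zero]
    have hiY : p.sp.P i (p.gm.nabla (p.xF l) Y) = 0 := by
      rw [p.sp.P_nabla_eq_mh_add_mT hjk hij hik hξ hY, hmh_jk, hmT_jk, add_zero]
    rw [p.sp.ht_eq_ht_P_of_mh hij.symm hjk hik hmh_ik hY, hkX, p.sp.ht_symm j X,
      p.sp.ht_eq_ht_P_of_mh hjk hij.symm hik.symm
        (fun A B => (p.sp.mh_comm j k i A B).trans (hmh_ik A B)) hX,
      hiY, p.sp.ht_zero_left, p.sp.ht_zero_left, sub_zero, sub_zero, p.gm.g_zero_left]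
  · have hξ : p.sp.P j (p.xF l) = 0 := p.sp.P_eq_zero_of_P_eq_self (Ne.symm hl) (p.P_xF l)
    rw [p.gm.g_sub_left, p.gm.g_sub_left, p.gm.g_zero_left,
      p.sp.g_eq_zero_of_P_eq_self (p.sp.P_ht j _ _) hξ,
      p.sp.g_eq_zero_of_P_eq_self (p.sp.P_ht j _ _) hξ, sub_zero, sub_zero]

end Pkg

/-- If `D₁, D₂, D₃` are integrable, pairwise mixed totally
geodesic and pairwise mixed integrable, and `P₃h₁ = P₃h₂ = 0`, then for all
`X ∈ D₁`, `Y ∈ D₃`: `A_{1,Y} = 0` (hence `Div A_{1,Y} = 0`), `A_{12,Y} = 0`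
(hence `Div A_{12,Y} = 0`), `g(∇_X H₁, Y) = 0`, `(Div h̃₂)(X,Y) = 0`, and
`P₃(H₁+H₂) = 0`; consequently the Euler-Lagrange equation corresponding to
variations with `B = B|_{(D₁×D₃)∪(D₃×D₁)}` holds, all its terms vanishing. -/
theorem integrable_mixed_tg_EL13_vanishes
    {M : Type} {V : SmoothVF M} (p : Pkg V)
    -- D₁, D₂, D₃ integrable
    (hT : ∀ (i : Fin 3) X Y, p.sp.T i X Y = 0)
    -- pairwise mixed totally geodesic
    (hmh12 : ∀ X Y, p.sp.mh 2 0 1 X Y = 0)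
    (hmh13 : ∀ X Y, p.sp.mh 1 0 2 X Y = 0)
    (hmh23 : ∀ X Y, p.sp.mh 0 1 2 X Y = 0)
    -- pairwise mixed integrable
    (hmT12 : ∀ X Y, p.sp.mT 2 0 1 X Y = 0)
    (hmT13 : ∀ X Y, p.sp.mT 1 0 2 X Y = 0)
    (hmT23 : ∀ X Y, p.sp.mT 0 1 2 X Y = 0)
    -- P₃ h₁ = 0 and P₃ h₂ = 0
    (hPh1 : ∀ X Y, p.sp.P 2 (p.sp.h 0 X Y) = 0)
    (hPh2 : ∀ X Y, p.sp.P 2 (p.sp.h 1 X Y) = 0) :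
    (∀ Y, p.sp.P 2 Y = Y →
      (∀ W Z, p.gm.g (p.sp.h 0 W Z) Y = 0)
      ∧ (∀ X, p.DivOp (p.Aop 0 Y) X = 0)
      ∧ (∀ W Z, p.gm.g (p.sp.h12 W Z) Y = 0)
      ∧ (∀ X, p.DivOp (p.Aop12 Y) X = 0))
    ∧ (∀ X Y, p.sp.P 0 X = X → p.sp.P 2 Y = Y →
        p.gm.g (p.gm.nabla X (p.H 0)) Y = 0 ∧ p.DivT (p.sp.ht 1) X Y = 0)
    ∧ p.sp.P 2 (p.H 0 + p.H 1) = 0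
    ∧ (∀ X Y, p.sp.P 0 X = X → p.sp.P 2 Y = Y → EL13 p X Y = 0) := by
  have hTt0 := p.sp.Tt_eq_zero_of_mixed_integrable (k := 0) (by decide) (by decide)
    (by decide) (hT 1) (hT 2) hmT23
  have hTt2 := p.sp.Tt_eq_zero_of_mixed_integrable (k := 2) (by decide) (by decide)
    (by decide) (hT 0) (hT 1) hmT12
  have hht2 := p.sp.ht_eq_zero_of_mixed_totally_geodesic (k := 2) (by decide) (by decide)
    (by decide) hPh1 hPh2 hmh12
  have hH0 : p.sp.P 1 (p.H 0) = p.H 0 :=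
    p.P_H_eq_self (k := 2) (by decide) (by decide) (by decide) hPh1
  have hP2H : p.sp.P 2 (p.H 0 + p.H 1) = 0 := by
    rw [p.sp.P_add, p.P_H_eq_zero hPh1, p.P_H_eq_zero hPh2, add_zero]
  have hh0 : ∀ Y, p.sp.P 2 Y = Y → ∀ W Z, p.gm.g (p.sp.h 0 W Z) Y = 0 :=
    fun _ hY W Z => p.sp.g_eq_zero_of_P_eq_zero (hPh1 W Z) hY
  have hh12 : ∀ Y W Z, p.gm.g (p.sp.h12 W Z) Y = 0 := fun Y W Z => by
    rw [p.sp.h12_eq_ht, hht2, p.gm.g_zero_left]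
  have hnH0 : ∀ X Y, p.sp.P 0 X = X → p.sp.P 2 Y = Y →
      p.gm.g (p.gm.nabla X (p.H 0)) Y = 0 := fun X Y hX hY =>
    p.sp.g_nabla_eq_zero_of_mh_of_mT (by decide) (by decide) (by decide) hX hY hH0
      (hmh13 X Y) (hmT13 X Y)
  have hDivT : ∀ X Y, p.sp.P 0 X = X → p.sp.P 2 Y = Y → p.DivT (p.sp.ht 1) X Y = 0 :=
    fun X Y hX hY => p.DivT_ht_eq_zero (by decide) (by decide) (by decide) hmh13 hmh12 hmT12
      hmh23 hmT23 hX hY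
  refine ⟨fun Y hY => ⟨hh0 Y hY, p.DivOp_Aop_eq_zero (hh0 Y hY), hh12 Y,
    p.DivOp_Aop12_eq_zero (hh12 Y)⟩, fun X Y hX hY => ⟨hnH0 X Y hX hY, hDivT X Y hX hY⟩, hP2H,
    fun X Y hX hY => ?_⟩
  have hht0 : p.sp.ht 0 Y (p.H 0) = 0 := by
    rw [p.sp.ht_eq_mh 0 (by decide) hY hH0, p.sp.mh_comm, hmh23]
  simp only [EL13, hT, hmh12, hmh13, hmh23, hmT12, hmT13, hmT23, hTt0, hTt2, hht0,
    p.DivOp_Aop_eq_zero (hh0 Y hY), p.DivOp_Aop12_eq_zero (hh12 Y), p.DivOp_Ttop_eq_zero hTt0,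
    p.DivOp_Ttop12_eq_zero (hT 2), hnH0 X Y hX hY, hDivT X Y hX hY, hP2H,
    p.sp.g_eq_zero_of_P_eq_zero (p.P_H_eq_zero hPh1) hY,
    p.sp.g_eq_zero_of_P_eq_zero (p.P_H_eq_zero hPh2) hY, p.sp.g_eq_zero_of_P_eq_self hY (hPh2 _ _),
    p.gm.g_zero_left, p.gm.g_zero_right, p.sp.h_zero_right, p.gm.nabla_zero_right,
    mul_zero, zero_mul, Finset.sum_const_zero, add_zero, sub_self]
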